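/- arXiv:1801.03483 — 4 statements merged into one kernel-verified Lean document; each statement's English description precedes it below -/
import Mathlib

section
/- In an abstract represented-problem setup over X, if the decision procedure P is extensional (EXT), then P satisfies α-extended (αE) if and only if P satisfies γ⁺-extended (γ⁺E). -/
/-!
Under EXT, αE says that restricting a problem to a subproblem still containing the choice keeps
the choice. For γ⁺E, represent `⟦a⟧ ∪ ⟦b⟧` by some `d`: its choice lies in `⟦a⟧` or in `⟦b⟧`; in
the second case restricting to `⟦b⟧` shows it is `P b ∈ ⟦a⟧`, and restricting to `⟦a⟧` then shows
it is `P a`. Conversely, for `B ⊆ ⟦a⟧` apply γ⁺E to a representative of `B` and `a`: the union is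
`⟦a⟧`, so EXT makes the representative's choice `P a`.
-/

namespace RepresentedProblem

variable {X T : Type*} (ext : T → Finset X) (P : T → X)

def AlphaExtended : Prop :=
  ∀ (a : T) (B : Finset X), B.Nonempty → P a ∈ B → B ⊆ ext a → ∃ b : T, ext b = B ∧ P b = P a

def GammaPlusExtended [DecidableEq X] : Prop :=
  ∀ a b : T, P b ∈ ext a → ∃ d : T, ext d = ext a ∪ ext b ∧ P d = P a

variable {ext P}

theorem eq_of_alphaExtended (hEXT : ∀ a b : T, ext a = ext b → P a = P b)
    (hα : AlphaExtended ext P) {a d : T} (hPd : P d ∈ ext a) (hsub : ext a ⊆ ext d) :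
    P d = P a := by
  obtain ⟨b, hb, hPb⟩ := hα d (ext a) ⟨_, hPd⟩ hPd hsub
  rw [← hPb]
  exact hEXT b a hb

theorem gammaPlusExtended_of_alphaExtended [DecidableEq X] (hP : ∀ a : T, P a ∈ ext a)
    (hrep : ∀ A : Finset X, A.Nonempty → ∃ t : T, ext t = A)
    (hEXT : ∀ a b : T, ext a = ext b → P a = P b) (hα : AlphaExtended ext P) :
    GammaPlusExtended ext P := by
  intro a b hPb
  obtain ⟨d, hd⟩ := hrep (ext a ∪ ext b) ⟨_, Finset.mem_union_left _ hPb⟩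
  refine ⟨d, hd, eq_of_alphaExtended hEXT hα ?_ (hd ▸ Finset.subset_union_left)⟩
  rcases Finset.mem_union.1 (hd ▸ hP d) with h | h
  · exact h
  · rwa [eq_of_alphaExtended hEXT hα h (hd ▸ Finset.subset_union_right)]

theorem alphaExtended_of_gammaPlusExtended [DecidableEq X]
    (hrep : ∀ A : Finset X, A.Nonempty → ∃ t : T, ext t = A)
    (hEXT : ∀ a b : T, ext a = ext b → P a = P b) (hγ : GammaPlusExtended ext P) :
    AlphaExtended ext P := by
  intro a B hB hPa hBsub
  obtain ⟨b, hb⟩ := hrep B hB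
  obtain ⟨d, hd, hPd⟩ := hγ b a (hb ▸ hPa)
  have hda : ext d = ext a := by rw [hd, hb, Finset.union_eq_right.2 hBsub]
  exact ⟨b, hb, hPd ▸ hEXT d a hda⟩

end RepresentedProblem

theorem stmt_3_general {X T : Type*} [DecidableEq X] (ext : T → Finset X)
    (P : T → X) (hP : ∀ a : T, P a ∈ ext a)
    (r : (A : Finset X) → A.Nonempty → T)
    (hr : ∀ (A : Finset X) (hA : A.Nonempty), ext (r A hA) = A)
    (hEXT : ∀ a b : T, ext a = ext b → P a = P b) :
    (∀ (a : T) (B : Finset X), B.Nonempty → P a ∈ B → B ⊆ ext a →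
        ∃ b : T, ext b = B ∧ P b = P a) ↔
      (∀ a b : T, P b ∈ ext a → ∃ d : T, ext d = ext a ∪ ext b ∧ P d = P a) := by
  have hrep : ∀ A : Finset X, A.Nonempty → ∃ t : T, ext t = A := fun A hA => ⟨r A hA, hr A hA⟩
  exact ⟨RepresentedProblem.gammaPlusExtended_of_alphaExtended hP hrep hEXT,
    RepresentedProblem.alphaExtended_of_gammaPlusExtended hrep hEXT⟩

/-- In an abstract represented-problem setup over `X`, if the decision
procedure `P` is extensional, then `P` satisfies α-extended iff it satisfies
γ⁺-extended. -/
theorem stmt_3 {X T : Type*} [DecidableEq X] (ext : T → Finset X)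
    (hne : ∀ a : T, (ext a).Nonempty)
    (P : T → X) (hP : ∀ a : T, P a ∈ ext a)
    (r : (A : Finset X) → A.Nonempty → T)
    (hr : ∀ (A : Finset X) (hA : A.Nonempty), ext (r A hA) = A)
    (hEXT : ∀ a b : T, ext a = ext b → P a = P b) :
    (∀ (a : T) (B : Finset X), B.Nonempty → P a ∈ B → B ⊆ ext a →
        ∃ b : T, ext b = B ∧ P b = P a) ↔
      (∀ a b : T, P b ∈ ext a → ∃ d : T, ext d = ext a ∪ ext b ∧ P d = P a) :=
  stmt_3_general ext P hP r hr hEXT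
end

section
/- Let P be a decision procedure on List2 X that is strongly inductive (SIND) and satisfies T-independence of irrelevant alternatives (TIIA). Then P satisfies α-extended (αE). -/
/-- The algebraic datatype `List2 X` of nonempty lists built from singletons and
concatenation. -/
inductive List2 (X : Type) : Type where
  | Sing2 : X → List2 X
  | Cat : List2 X → List2 X → List2 X

variable {X : Type} [DecidableEq X]

/-- The extension of a represented decision problem: the set of alternatives it
contains. -/
def List2.ext : List2 X → Finset X
  | .Sing2 x => {x}
  | .Cat a b => a.ext ∪ b.ext

theorem List2.ext_nonempty : ∀ a : List2 X, a.ext.Nonempty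
  | .Sing2 x => ⟨x, by simp [List2.ext]⟩
  | .Cat a b => (List2.ext_nonempty a).mono (by simp [List2.ext, Finset.subset_union_left])

/-!
Removing a single losing alternative `y` from a problem `a` can be done without changing the
winner, by induction on `a`. In `Cat a₁ a₂`, if `y` loses in both parts it is removed from each
part and strong inductivity keeps the winner. If `y` wins one part, say `a₁`, then the winner
`x` of `Cat a₁ a₂` is the winner of `a₂`, and TIIA replaces `a₁` by a problem on
`a₁ \ {y} ∪ {x}` still won by `x` against `a₂`; since `x` already lies in `a₂`, removing `y`
from `a₂` as well gives a problem on exactly the union minus `y`. Removing the alternatives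
outside `B` one at a time then proves α-extended.
-/

namespace List2

variable {P : List2 X → X}

def StronglyInductive (P : List2 X → X) : Prop :=
  ∀ x y : X,
    (∀ a b : List2 X, P a = x → P b = y → P (Cat a b) = x) ∨
    (∀ a b : List2 X, P a = x → P b = y → P (Cat a b) = y)

def SatisfiesTIIA (P : List2 X → X) : Prop :=
  (∀ (a₁ a₂ : List2 X) (x y : X), P (Cat a₁ a₂) = x → P a₁ = y → y ≠ x →
      ∃ b : List2 X, b.ext = (a₁.ext \ {y}) ∪ {x} ∧ P (Cat b a₂) = x) ∧
  (∀ (a₁ a₂ : List2 X) (x y : X), P (Cat a₁ a₂) = x → P a₂ = y → y ≠ x →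
      ∃ b : List2 X, b.ext = (a₂.ext \ {y}) ∪ {x} ∧ P (Cat a₁ b) = x)

theorem StronglyInductive.cat_eq_or {Y : Type} {P : List2 Y → Y} (hS : StronglyInductive P)
    (a b : List2 Y) : P (Cat a b) = P a ∨ P (Cat a b) = P b :=
  (hS (P a) (P b)).imp (· a b rfl rfl) (· a b rfl rfl)

theorem StronglyInductive.cat_congr {Y : Type} {P : List2 Y → Y} (hS : StronglyInductive P)
    {a₁ a₂ b₁ b₂ : List2 Y} (ha : P a₁ = P a₂) (hb : P b₁ = P b₂) :
    P (Cat a₁ b₁) = P (Cat a₂ b₂) := by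
  rcases hS (P a₁) (P b₁) with h | h <;> rw [h a₁ b₁ rfl rfl, h a₂ b₂ ha.symm hb.symm]

theorem exists_ext_eq_erase (hP : ∀ a : List2 X, P a ∈ a.ext) (hS : StronglyInductive P)
    (hT : SatisfiesTIIA P) (a : List2 X) (y : X) (hy : y ≠ P a) :
    ∃ a' : List2 X, a'.ext = a.ext.erase y ∧ P a' = P a := by
  induction a with
  | Sing2 z =>
    refine ⟨Sing2 z, ?_, rfl⟩
    have hz : P (Sing2 z) = z := by simpa [List2.ext] using hP (Sing2 z)
    simp [List2.ext, hz ▸ hy]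
  | Cat a₁ a₂ ih₁ ih₂ =>
    set x := P (Cat a₁ a₂)
    by_cases hy₁ : P a₁ = y
    · have hx : x = P a₂ := (hS.cat_eq_or a₁ a₂).resolve_left fun h => hy (h.trans hy₁).symm
      obtain ⟨b, hb, hbP⟩ := hT.1 a₁ a₂ x y rfl hy₁ hy
      obtain ⟨b₂, hb₂, hb₂P⟩ := ih₂ (hx ▸ hy)
      refine ⟨Cat b b₂, ?_, (hS.cat_congr rfl hb₂P).trans hbP⟩
      simp only [List2.ext, hb, hb₂]
      grind [hP a₂]
    by_cases hy₂ : P a₂ = y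
    · have hx : x = P a₁ := (hS.cat_eq_or a₁ a₂).resolve_right fun h => hy (h.trans hy₂).symm
      obtain ⟨b, hb, hbP⟩ := hT.2 a₁ a₂ x y rfl hy₂ hy
      obtain ⟨b₁, hb₁, hb₁P⟩ := ih₁ (hx ▸ hy)
      refine ⟨Cat b₁ b, ?_, (hS.cat_congr hb₁P rfl).trans hbP⟩
      simp only [List2.ext, hb, hb₁]
      grind [hP a₁]
    obtain ⟨b₁, hb₁, hb₁P⟩ := ih₁ (Ne.symm hy₁)
    obtain ⟨b₂, hb₂, hb₂P⟩ := ih₂ (Ne.symm hy₂)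
    exact ⟨Cat b₁ b₂, by simp only [List2.ext, hb₁, hb₂, Finset.erase_union_distrib],
      hS.cat_congr hb₁P hb₂P⟩

theorem exists_ext_eq_sdiff (hP : ∀ a : List2 X, P a ∈ a.ext) (hS : StronglyInductive P)
    (hT : SatisfiesTIIA P) (a : List2 X) (S : Finset X) (haS : P a ∉ S) :
    ∃ b : List2 X, b.ext = a.ext \ S ∧ P b = P a := by
  induction S using Finset.induction_on with
  | empty => exact ⟨a, Finset.sdiff_empty.symm, rfl⟩
  | insert y S _ ih =>
    rw [Finset.mem_insert, not_or] at haS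
    obtain ⟨b, hb, hbP⟩ := ih haS.2
    obtain ⟨b', hb', hb'P⟩ := exists_ext_eq_erase hP hS hT b y (hbP ▸ Ne.symm haS.1)
    exact ⟨b', by rw [hb', hb, Finset.sdiff_insert], hb'P.trans hbP⟩

end List2

/-- A decision procedure on `List2 X` that is strongly inductive and
satisfies T-independence of irrelevant alternatives satisfies α-extended. -/
theorem stmt_8 {X : Type} [DecidableEq X] (P : List2 X → X)
    (hP : ∀ a : List2 X, P a ∈ a.ext)
    (hSIND : ∀ x y : X,
      (∀ a b : List2 X, P a = x → P b = y → P (List2.Cat a b) = x) ∨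
      (∀ a b : List2 X, P a = x → P b = y → P (List2.Cat a b) = y))
    (hTIIA₁ : ∀ (a₁ a₂ : List2 X) (x y : X),
      P (List2.Cat a₁ a₂) = x → P a₁ = y → y ≠ x →
        ∃ b : List2 X, b.ext = (a₁.ext \ {y}) ∪ {x} ∧ P (List2.Cat b a₂) = x)
    (hTIIA₂ : ∀ (a₁ a₂ : List2 X) (x y : X),
      P (List2.Cat a₁ a₂) = x → P a₂ = y → y ≠ x →
        ∃ b : List2 X, b.ext = (a₂.ext \ {y}) ∪ {x} ∧ P (List2.Cat a₁ b) = x) :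
    ∀ (a : List2 X) (B : Finset X), B.Nonempty → P a ∈ B → B ⊆ a.ext →
      ∃ b : List2 X, b.ext = B ∧ P b = P a := by
  intro a B _ haB hBa
  obtain ⟨b, hb, hbP⟩ := List2.exists_ext_eq_sdiff hP hSIND ⟨hTIIA₁, hTIIA₂⟩ a (a.ext \ B)
    fun h => (Finset.mem_sdiff.1 h).2 haB
  exact ⟨b, by rw [hb, Finset.sdiff_sdiff_eq_self hBa], hbP⟩
end

section
/- Let P be a decision procedure on List2 X that is intensional (INT). Then P satisfies γ⁺-extended (γ⁺E). -/
variable {X : Type} [DecidableEq X]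

/-- `a.subst x y` is `a[y/x]`: replace every occurrence of `x` in `a` by `y`. -/
def List2.subst (x y : X) : List2 X → List2 X
  | .Sing2 z => .Sing2 (if z = x then y else z)
  | .Cat a b => .Cat (a.subst x y) (b.subst x y)

namespace List2

def map {α β : Type} (f : α → β) : List2 α → List2 β
  | .Sing2 v => .Sing2 (f v)
  | .Cat a b => .Cat (a.map f) (b.map f)

theorem ext_map {α β : Type} [DecidableEq α] [DecidableEq β] (f : α → β) :
    ∀ t : List2 α, (t.map f).ext = t.ext.image f
  | .Sing2 v => by simp [map, ext]
  | .Cat a b => by simp [map, ext, ext_map f a, ext_map f b, Finset.image_union]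

theorem map_map {α β γ : Type} (g : β → γ) (f : α → β) :
    ∀ t : List2 α, (t.map f).map g = t.map (g ∘ f)
  | .Sing2 v => rfl
  | .Cat a b => by simp [map, map_map g f a, map_map g f b]

theorem map_id' {α : Type} : ∀ t : List2 α, (t.map fun a => a) = t
  | .Sing2 v => rfl
  | .Cat a b => by simp [map, map_id' a, map_id' b]

theorem map_congr {α β : Type} [DecidableEq α] {f g : α → β} :
    ∀ t : List2 α, (∀ v ∈ t.ext, f v = g v) → t.map f = t.map g
  | .Sing2 v, h => by simp [map, h v (by simp [ext])]
  | .Cat a b, h => by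
      simp only [map, Cat.injEq]
      exact ⟨map_congr a fun v hv => h v (by simp [ext, hv]),
        map_congr b fun v hv => h v (by simp [ext, hv])⟩

theorem subst_eq_map (x y : X) (t : List2 X) :
    t.subst x y = t.map fun z => if z = x then y else z := by
  induction t with
  | Sing2 v => rfl
  | Cat a b iha ihb => simp [subst, map, iha, ihb]

theorem subst_subst_self (v w : X) (t : List2 X) :
    (t.subst w v).subst v w = t.subst v w := by
  simp only [subst_eq_map, map_map]
  congr 1
  funext z
  by_cases hz : z = w <;> simp [hz]

theorem exists_ext_eq_of_nonempty {α : Type} [DecidableEq α] {T : Finset α} (hT : T.Nonempty) :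
    ∃ e : List2 α, e.ext = T := by
  induction hT using Finset.Nonempty.cons_induction with
  | singleton a => exact ⟨.Sing2 a, rfl⟩
  | cons a T _ _ ih =>
    obtain ⟨e, he⟩ := ih
    exact ⟨.Cat (.Sing2 a) e, by simp only [ext, he, Finset.cons_eq_insert, Finset.insert_eq]⟩

end List2

open List2

/-- Condition (INT). -/
def Intensional (P : List2 X → X) : Prop :=
  ∀ (a : List2 X) (x y : X), P a = x → P (a.subst x y) = y

namespace Intensional

variable {P : List2 X → X}

theorem apply_subst_of_apply_eq (hP : Intensional P) {t : List2 X} {w : X} (ht : P t = w)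
    (v : X) : P (t.subst v w) = w := by
  rw [← subst_subst_self]
  exact hP _ v w (hP t w v ht)

theorem apply_map_ite_mem_of_apply_eq (hP : Intensional P) {t : List2 X} {w : X} (ht : P t = w)
    (A : Finset X) : P (t.map fun z => if z ∈ A then w else z) = w := by
  induction A using Finset.induction_on generalizing t with
  | empty => simpa [map_id'] using ht
  | insert a A _ ih =>
    have hmerge : (t.subst a w).map (fun z => if z ∈ A then w else z) =
        t.map fun z => if z ∈ insert a A then w else z := by
      rw [subst_eq_map, map_map]
      congr 1
      funext z
      by_cases hza : z = a <;> simp [hza]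
    rw [← hmerge]
    exact ih (hP.apply_subst_of_apply_eq ht a)

theorem apply_map_ite_eq_of_apply_ne (hP : Intensional P) {t : List2 X} {s : X} (ht : P t ≠ s)
    (w : X) : P (t.map fun z => if z = s then s else w) = w := by
  have hmerged := hP.apply_map_ite_mem_of_apply_eq (t := t) rfl (t.ext.erase s)
  have hcollapse : ((t.map fun z => if z ∈ t.ext.erase s then P t else z).subst (P t) w) =
      t.map fun z => if z = s then s else w := by
    rw [subst_eq_map, map_map]
    refine map_congr t fun v hv => ?_
    by_cases hvs : v = s
    · simp [hvs, Ne.symm ht]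
    · simp [hvs, hv]
  rw [← hcollapse]
  exact hP _ _ w hmerged

theorem apply_eq_or_apply_eq_of_map_ite_eq (hP : Intensional P) {t u : List2 X} {s x : X}
    (hsx : s ≠ x)
    (h : (t.map fun z => if z = s then s else x) = u.map fun z => if z = x then x else s) :
    P t = s ∨ P u = x := by
  by_contra! hne
  have hx := hP.apply_map_ite_eq_of_apply_ne hne.1 x
  rw [h, hP.apply_map_ite_eq_of_apply_ne hne.2 s] at hx
  exact hsx hx

theorem exists_ext_eq_and_apply_eq (hP : Intensional P) {S : Finset X} {x y z : X} (hx : x ∈ S)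
    (hS : (S.erase x).Nonempty) (hyx : y ≠ x) (hzx : z ≠ x) (hyz : y ≠ z) :
    ∃ d : List2 X, d.ext = S ∧ P d = x := by
  by_contra! havoid
  obtain ⟨e, he⟩ := exists_ext_eq_of_nonempty hS
  have hxe : ∀ v ∈ e.ext, v ≠ x := fun v hv => Finset.ne_of_mem_erase (he ▸ hv)
  have hconst : ∀ w : X, (e.map fun _ => w).ext = {w} := fun w => by
    rw [ext_map, Finset.image_const (e.ext_nonempty)]
  have hext : (Cat (e.map fun _ => x) e).ext = S ∧ (Cat e (e.map fun _ => x)).ext = S := by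
    simp only [ext, hconst, he, Finset.singleton_union, Finset.union_singleton,
      Finset.insert_erase hx, and_self]
  have hcollapse_e : ∀ w, (e.map fun z => if z = x then x else w) = e.map fun _ => w :=
    fun w => map_congr e fun v hv => by simp [hxe v hv]
  have hz : P (Cat (e.map fun _ => y) (e.map fun _ => z)) = z := by
    refine (hP.apply_eq_or_apply_eq_of_map_ite_eq hzx ?_).resolve_right
      (havoid _ hext.1)
    simp [map, map_map, Function.comp_def, hcollapse_e, hyz]
  have hy : P (Cat (e.map fun _ => y) (e.map fun _ => z)) = y := by
    refine (hP.apply_eq_or_apply_eq_of_map_ite_eq hyx ?_).resolve_right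
      (havoid _ hext.2)
    simp [map, map_map, Function.comp_def, hcollapse_e, hyz.symm]
  exact hyz (hy.symm.trans hz)

end Intensional

/-- An intensional decision procedure on `List2 X` satisfies
γ⁺-extended. -/
theorem stmt_12 {X : Type} [DecidableEq X] (P : List2 X → X)
    (hP : ∀ a : List2 X, P a ∈ a.ext)
    (hINT : ∀ (a : List2 X) (x y : X), P a = x → P (a.subst x y) = y) :
    ∀ a b : List2 X, P b ∈ a.ext →
      ∃ d : List2 X, d.ext = a.ext ∪ b.ext ∧ P d = P a := by
  intro a b hab
  by_cases hba : b.ext ⊆ a.ext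
  · exact ⟨a, (Finset.union_eq_left.mpr hba).symm, rfl⟩
  obtain ⟨w, -, hwa⟩ := Finset.not_subset.mp hba
  by_cases ha : a.ext = {P a}
  · have hPb : P b = P a := Finset.mem_singleton.mp (ha ▸ hab)
    refine ⟨b, ?_, hPb⟩
    rw [ha, ← hPb, Finset.union_eq_right.mpr (Finset.singleton_subset_iff.mpr (hP b))]
  obtain ⟨v, hva, hv⟩ : ∃ v ∈ a.ext, v ≠ P a := by
    by_contra! h
    exact ha (Finset.eq_singleton_iff_unique_mem.mpr ⟨hP a, h⟩)
  have hINT : Intensional P := hINT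
  exact hINT.exists_ext_eq_and_apply_eq (Finset.mem_union_left _ (hP a))
    ⟨v, Finset.mem_erase.mpr ⟨hv, Finset.mem_union_left _ hva⟩⟩ hv
    (fun h : w = P a => hwa (h ▸ hP a)) (fun h : v = w => hwa (h ▸ hva))
end

section
/- There exist a type X and a decision procedure P on Tree X such that P is strongly inductive (SIND) but does not satisfy T-independence of irrelevant alternatives (TIIA). (For example, take X = {x, y, z} with the cyclic relation x ≻ y, y ≻ z, z ≻ x, and let P(Leaf x) = x and P(Node t₁ t₂ t₃) be the ≻-maximal element among P(t₁), P(t₂), P(t₃).) -/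
/-!
Evaluate a tree bottom-up by a tournament: a leaf yields its label, and a node yields the winner of
`(P t₁ vs P t₂) vs P t₃` for a selective binary choice `w`. The value of a node is then a fixed
one of the values of its children, so `P` is strongly inductive. For rock–paper–scissors on
`Fin 3` (`a` beats `a + 1`) TIIA fails: `Node (Leaf 0) (Leaf 1) (Leaf 2)` evaluates to `2`, but
any replacement `b` of the first child must have extension `{2}`, hence value `2`, and then `1`
beats `2` in the first match and again in the second.
-/

/-- The algebraic datatype `Tree3 X` (the paper's `Tree`) of ternary trees with values at the leaves. -/
inductive Tree3 (X : Type) : Type where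
  | Leaf : X → Tree3 X
  | Node : Tree3 X → Tree3 X → Tree3 X → Tree3 X

/-- The extension of a represented decision problem on `Tree3`. -/
def Tree3.ext {X : Type} [DecidableEq X] : Tree3 X → Finset X
  | .Leaf x => {x}
  | .Node t₁ t₂ t₃ => t₁.ext ∪ t₂.ext ∪ t₃.ext

namespace Tree3

variable {X : Type}

def StronglyInductive (P : Tree3 X → X) : Prop :=
  ∀ x₁ x₂ x₃ : X,
    (∀ t₁ t₂ t₃ : Tree3 X, P t₁ = x₁ → P t₂ = x₂ → P t₃ = x₃ → P (Node t₁ t₂ t₃) = x₁) ∨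
    (∀ t₁ t₂ t₃ : Tree3 X, P t₁ = x₁ → P t₂ = x₂ → P t₃ = x₃ → P (Node t₁ t₂ t₃) = x₂) ∨
    (∀ t₁ t₂ t₃ : Tree3 X, P t₁ = x₁ → P t₂ = x₂ → P t₃ = x₃ → P (Node t₁ t₂ t₃) = x₃)

def TIIA [DecidableEq X] (P : Tree3 X → X) : Prop :=
  (∀ (t₁ t₂ t₃ : Tree3 X) (x y : X), P (Node t₁ t₂ t₃) = x → P t₁ = y → y ≠ x →
      ∃ b : Tree3 X, b.ext = (t₁.ext \ {y}) ∪ {x} ∧ P (Node b t₂ t₃) = x) ∧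
    (∀ (t₁ t₂ t₃ : Tree3 X) (x y : X), P (Node t₁ t₂ t₃) = x → P t₂ = y → y ≠ x →
      ∃ b : Tree3 X, b.ext = (t₂.ext \ {y}) ∪ {x} ∧ P (Node t₁ b t₃) = x) ∧
    (∀ (t₁ t₂ t₃ : Tree3 X) (x y : X), P (Node t₁ t₂ t₃) = x → P t₃ = y → y ≠ x →
      ∃ b : Tree3 X, b.ext = (t₃.ext \ {y}) ∪ {x} ∧ P (Node t₁ t₂ b) = x)

lemma eq_of_ext_eq_singleton [DecidableEq X] {P : Tree3 X → X} (hP : ∀ a, P a ∈ a.ext)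
    {t : Tree3 X} {x : X} (ht : t.ext = {x}) : P t = x :=
  Finset.mem_singleton.mp (ht ▸ hP t)

def tournament (w : X → X → X) : Tree3 X → X
  | Leaf x => x
  | Node t₁ t₂ t₃ => w (w (tournament w t₁) (tournament w t₂)) (tournament w t₃)

section Selective

variable {w : X → X → X} (hw : ∀ a b, w a b = a ∨ w a b = b)
include hw

lemma selective_comp_eq (a b c : X) : w (w a b) c = a ∨ w (w a b) c = b ∨ w (w a b) c = c := by
  rcases hw (w a b) c with h | h
  · rcases hw a b with h' | h' <;> rw [h, h'] <;> simp
  · simp [h]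

lemma tournament_mem_ext [DecidableEq X] (t : Tree3 X) : tournament w t ∈ t.ext := by
  induction t with
  | Leaf x => simp [tournament, ext]
  | Node t₁ t₂ t₃ ih₁ ih₂ ih₃ =>
    simp only [tournament, ext, Finset.mem_union]
    rcases selective_comp_eq hw (tournament w t₁) (tournament w t₂) (tournament w t₃)
      with h | h | h <;> rw [h] <;> tauto

lemma stronglyInductive_tournament : StronglyInductive (tournament w) := by
  intro x₁ x₂ x₃
  rcases selective_comp_eq hw x₁ x₂ x₃ with h | h | h
  · exact .inl fun t₁ t₂ t₃ h₁ h₂ h₃ => by simp [tournament, h₁, h₂, h₃, h]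
  · exact .inr <| .inl fun t₁ t₂ t₃ h₁ h₂ h₃ => by simp [tournament, h₁, h₂, h₃, h]
  · exact .inr <| .inr fun t₁ t₂ t₃ h₁ h₂ h₃ => by simp [tournament, h₁, h₂, h₃, h]

end Selective

end Tree3

open Tree3

def rockPaperScissors (a b : Fin 3) : Fin 3 := if b = a + 1 then a else b

lemma rockPaperScissors_selective (a b : Fin 3) :
    rockPaperScissors a b = a ∨ rockPaperScissors a b = b := by
  unfold rockPaperScissors
  split <;> simp

lemma not_tiia_tournament_rockPaperScissors : ¬ TIIA (tournament rockPaperScissors) := by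
  rintro ⟨hfirst, -, -⟩
  obtain ⟨b, hb, hwin⟩ :=
    hfirst (.Leaf 0) (.Leaf 1) (.Leaf 2) 2 0 (by decide) rfl (by decide)
  have hb2 : tournament rockPaperScissors b = 2 :=
    eq_of_ext_eq_singleton (tournament_mem_ext rockPaperScissors_selective)
      (by rw [hb]; decide)
  simp only [tournament, hb2] at hwin
  exact absurd hwin (by decide)

/-- There are a type `X` and a decision procedure `P` on `Tree3 X`
that is strongly inductive but does not satisfy T-independence of irrelevant
alternatives. -/
theorem stmt_16 : ∃ (X : Type) (inst : DecidableEq X),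
    letI := inst
    ∃ P : Tree3 X → X,
      (∀ a : Tree3 X, P a ∈ a.ext) ∧
      -- SIND
      (∀ x₁ x₂ x₃ : X,
        (∀ t₁ t₂ t₃ : Tree3 X, P t₁ = x₁ → P t₂ = x₂ → P t₃ = x₃ →
          P (Tree3.Node t₁ t₂ t₃) = x₁) ∨
        (∀ t₁ t₂ t₃ : Tree3 X, P t₁ = x₁ → P t₂ = x₂ → P t₃ = x₃ →
          P (Tree3.Node t₁ t₂ t₃) = x₂) ∨
        (∀ t₁ t₂ t₃ : Tree3 X, P t₁ = x₁ → P t₂ = x₂ → P t₃ = x₃ →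
          P (Tree3.Node t₁ t₂ t₃) = x₃)) ∧
      -- not TIIA
      ¬((∀ (t₁ t₂ t₃ : Tree3 X) (x y : X), P (Tree3.Node t₁ t₂ t₃) = x → P t₁ = y → y ≠ x →
          ∃ b : Tree3 X, b.ext = (t₁.ext \ {y}) ∪ {x} ∧ P (Tree3.Node b t₂ t₃) = x) ∧
        (∀ (t₁ t₂ t₃ : Tree3 X) (x y : X), P (Tree3.Node t₁ t₂ t₃) = x → P t₂ = y → y ≠ x →
          ∃ b : Tree3 X, b.ext = (t₂.ext \ {y}) ∪ {x} ∧ P (Tree3.Node t₁ b t₃) = x) ∧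
        (∀ (t₁ t₂ t₃ : Tree3 X) (x y : X), P (Tree3.Node t₁ t₂ t₃) = x → P t₃ = y → y ≠ x →
          ∃ b : Tree3 X, b.ext = (t₃.ext \ {y}) ∪ {x} ∧ P (Tree3.Node t₁ t₂ b) = x)) :=
  ⟨Fin 3, inferInstance, tournament rockPaperScissors,
    tournament_mem_ext rockPaperScissors_selective,
    stronglyInductive_tournament rockPaperScissors_selective,
    not_tiia_tournament_rockPaperScissors⟩
end
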